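/- arXiv:1808.10163 — 5 statements merged into one kernel-verified Lean document; each statement's English description precedes it below -/
import Mathlib

section
/- Let S = ⊕_{g∈G} S_g be an epsilon-strongly G-graded ring with principal component R = S_e, and suppose that R is left noetherian or right noetherian. Then for any normal subgroup N of G, the induced G/N-grading of S, given by S = ⊕_{C∈G/N} S_C with S_C = ⊕_{g∈C} S_g, is an epsilon-strong G/N-grading of S. -/
open Pointwise

/-- `A` is a `G`-grading of the ring `S`: `S` is the internal direct sum of the
additive subgroups `A g`, and `A g * A h ⊆ A (g * h)` for all `g h : G`. -/
def IsGrading {G S : Type*} [Group G] [Ring S] [DecidableEq G]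
    (A : G → AddSubgroup S) : Prop :=
  DirectSum.IsInternal A ∧ ∀ g h : G, ∀ x ∈ A g, ∀ y ∈ A h, x * y ∈ A (g * h)

/-- The grading `A` is epsilon-strong: it is symmetric (`A g * A g⁻¹ * A g = A g`) and
for every `g` there is `ε g ∈ A g * A g⁻¹` acting as a left identity on `A g`, with
`ε g⁻¹` acting as a right identity on `A g`.  Here `P * Q` denotes the additive subgroup
generated by products of elements of `P` and `Q`. -/
def IsEpsilonStrong {G S : Type*} [Group G] [Ring S] (A : G → AddSubgroup S) : Prop :=
  (∀ g : G, A g * A g⁻¹ * A g = A g) ∧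
  ∃ ε : G → S, ∀ g : G, ε g ∈ A g * A g⁻¹ ∧ ∀ x ∈ A g, ε g * x = x ∧ x * ε g⁻¹ = x

/-!
Each `ε g` is the identity of the ideal `S_g S_{g⁻¹}` of `R`, hence a central idempotent of `R`.
For a coset `C`, one-sided noetherianity of `R` shows that the ideal generated by the `ε g` with
`g ∈ C` is already generated by finitely many of them; the Boolean join `a ∨ b = a + b - ab` of
those finitely many lies in `S_C S_{C⁻¹}` and fixes every `ε g` with `g ∈ C`, so it acts as an
identity on both sides of `S_C`. The coarsened decomposition stays direct because independence of
a family of subgroups passes to suprema over disjoint fibres.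
-/

namespace AddSubgroup

variable {R : Type*} [NonUnitalNonAssocRing R] {M N P M' N' : AddSubgroup R}

theorem mul_mem_mul {m n : R} (hm : m ∈ M) (hn : n ∈ N) : m * n ∈ M * N :=
  AddSubmonoid.mul_mem_mul hm hn

theorem mul_le : M * N ≤ P ↔ ∀ m ∈ M, ∀ n ∈ N, m * n ∈ P :=
  AddSubmonoid.mul_le (P := P.toAddSubmonoid)

@[elab_as_elim]
protected theorem mul_induction_on {motive : R → Prop} {x : R} (hx : x ∈ M * N)
    (mul : ∀ m ∈ M, ∀ n ∈ N, motive (m * n))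
    (add : ∀ x y, motive x → motive y → motive (x + y)) : motive x :=
  AddSubmonoid.mul_induction_on (M := M.toAddSubmonoid) (N := N.toAddSubmonoid) hx mul add

theorem mul_le_mul (hM : M ≤ M') (hN : N ≤ N') : M * N ≤ M' * N' :=
  mul_le.2 fun _ hm _ hn => mul_mem_mul (hM hm) (hN hn)

end AddSubgroup

theorem iSupIndep.biSup_fiber {ι κ α : Type*} [CompleteLattice α] [IsModularLattice α]
    [IsCompactlyGenerated α] {t : ι → α} (ht : iSupIndep t) (f : ι → κ) :
    iSupIndep fun k => ⨆ i ∈ {i | f i = k}, t i := by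
  intro k
  refine (ht.disjoint_biSup_biSup (t := {i | f i ≠ k})
    (Set.disjoint_left.2 fun _ hs ht => ht hs)).mono_right ?_
  exact iSup₂_le fun j hj => iSup₂_le fun i hi =>
    le_iSup₂_of_le (f := fun i (_ : f i ≠ k) => t i) i (hi ▸ hj) le_rfl

theorem iSup_biSup_fiber {ι κ α : Type*} [CompleteLattice α] (t : ι → α) (f : ι → κ) :
    ⨆ k, ⨆ i ∈ {i | f i = k}, t i = ⨆ i, t i := by
  rw [iSup_comm]
  exact iSup_congr fun i => iSup_iSup_eq_right

namespace DirectSum.IsInternal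

variable {ι κ : Type*} [DecidableEq ι] [DecidableEq κ]

theorem submodule_biSup_fiber {R M : Type*} [Ring R] [AddCommGroup M] [Module R M]
    {A : ι → Submodule R M} (h : IsInternal A) (f : ι → κ) :
    IsInternal fun k => ⨆ i ∈ {i | f i = k}, A i := by
  rw [isInternal_submodule_iff_iSupIndep_and_iSup_eq_top] at h ⊢
  exact ⟨h.1.biSup_fiber f, (iSup_biSup_fiber A f).trans h.2⟩

theorem addSubgroup_biSup_fiber {M : Type*} [AddCommGroup M] {A : ι → AddSubgroup M}
    (h : IsInternal A) (f : ι → κ) : IsInternal fun k => ⨆ i ∈ {i | f i = k}, A i := by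
  have := submodule_biSup_fiber (A := fun i => (A i).toIntSubmodule) h f
  simp_rw [← AddSubgroup.toIntSubmodule.map_iSup₂] at this
  exact this

end DirectSum.IsInternal

section CentralIdempotents

variable {T ι : Type*} [Ring T] (e : ι → T)

theorem exists_eq_sum_mul_of_mem_iSup_span {F : Finset ι} {x : T}
    (hx : x ∈ ⨆ j ∈ F, Ideal.span {e j}) : ∃ b : ι → T, x = ∑ j ∈ F, b j * e j := by
  obtain ⟨μ, rfl⟩ := (Submodule.mem_iSup_finset_iff_exists_sum _ x).1 hx
  choose b hb using fun j => Ideal.mem_span_singleton'.1 (μ j).2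
  exact ⟨b, by simp only [hb]⟩

theorem exists_finset_forall_mem_iSup_span [IsNoetherianRing T] :
    ∃ F : Finset ι, ∀ i, e i ∈ ⨆ j ∈ F, Ideal.span {e j} := by
  obtain ⟨F, hF⟩ := CompleteLattice.IsCompactElement.exists_finset_of_le_iSup _
    ((Submodule.fg_iff_compact _).1 (IsNoetherian.noetherian (⨆ i, Ideal.span {e i}))) _ le_rfl
  exact ⟨F, fun i => hF (Ideal.mem_iSup_of_mem i (Ideal.mem_span_singleton_self _))⟩

variable {e}

theorem exists_finset_forall_eq_sum_mul (hT : IsNoetherianRing T ∨ IsNoetherianRing Tᵐᵒᵖ)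
    (hc : ∀ i r, Commute (e i) r) :
    ∃ F : Finset ι, ∀ i, ∃ b : ι → T, e i = ∑ j ∈ F, b j * e j := by
  rcases hT with hT | hT
  · obtain ⟨F, hF⟩ := exists_finset_forall_mem_iSup_span e
    exact ⟨F, fun i => exists_eq_sum_mul_of_mem_iSup_span e (hF i)⟩
  · obtain ⟨F, hF⟩ := exists_finset_forall_mem_iSup_span (MulOpposite.op ∘ e)
    refine ⟨F, fun i => ?_⟩
    obtain ⟨b, hb⟩ := exists_eq_sum_mul_of_mem_iSup_span _ (hF i)
    -- left combinations in `Tᵐᵒᵖ` are right combinations in `T`, and the `e j` are central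
    refine ⟨fun j => (b j).unop, ?_⟩
    simpa [(hc _ _).eq] using congrArg MulOpposite.unop hb

theorem exists_mem_iSup_span_forall_mul_eq (hc : ∀ i r, Commute (e i) r)
    (hidem : ∀ i, IsIdempotentElem (e i)) (F : Finset ι) :
    ∃ u ∈ ⨆ j ∈ F, Ideal.span {e j}, ∀ j ∈ F, e j * u = e j := by
  classical
  induction F using Finset.induction_on with
  | empty => exact ⟨0, zero_mem _, by simp⟩
  | insert a F _ ih =>
    obtain ⟨u, hu, huF⟩ := ih
    have hsub : ⨆ j ∈ F, Ideal.span {e j} ≤ ⨆ j ∈ insert a F, Ideal.span {e j} :=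
      biSup_mono fun _ => Finset.mem_insert_of_mem
    have hea : Ideal.span {e a} ≤ ⨆ j ∈ insert a F, Ideal.span {e j} :=
      le_biSup (fun j => Ideal.span {e j}) (Finset.mem_insert_self a F)
    -- the Boolean join `u ∨ e a`
    refine ⟨u + e a - u * e a, sub_mem (add_mem (hsub hu) (hea (Ideal.mem_span_singleton_self _)))
      (hea (Ideal.mul_mem_left _ _ (Ideal.mem_span_singleton_self _))), fun j hj => ?_⟩
    rcases Finset.mem_insert.1 hj with rfl | hj
    · rw [mul_sub, mul_add, (hidem j).eq, ← mul_assoc, (hc j u).eq, mul_assoc, (hidem j).eq]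
      abel
    · rw [mul_sub, mul_add, ← mul_assoc, huF j hj]
      abel

theorem exists_finset_exists_mem_iSup_span_forall_mul_eq
    (hT : IsNoetherianRing T ∨ IsNoetherianRing Tᵐᵒᵖ) (hc : ∀ i r, Commute (e i) r)
    (hidem : ∀ i, IsIdempotentElem (e i)) :
    ∃ F : Finset ι, ∃ u ∈ ⨆ j ∈ F, Ideal.span {e j}, ∀ i, e i * u = e i := by
  obtain ⟨F, hF⟩ := exists_finset_forall_eq_sum_mul hT hc
  obtain ⟨u, hu, huF⟩ := exists_mem_iSup_span_forall_mul_eq hc hidem F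
  refine ⟨F, u, hu, fun i => ?_⟩
  obtain ⟨b, hb⟩ := hF i
  calc e i * u = (∑ j ∈ F, b j * e j) * u := by rw [← hb]
    _ = ∑ j ∈ F, b j * (e j * u) := by simp only [Finset.sum_mul, mul_assoc]
    _ = e i := by rw [hb]; exact Finset.sum_congr rfl fun j hj => by rw [huF j hj]

end CentralIdempotents

namespace EpsilonStrong

variable {G S : Type*} [Group G] [Ring S] {A : G → AddSubgroup S} {ε : G → S}

theorem mul_inv_le_one (hA : ∀ g h : G, ∀ x ∈ A g, ∀ y ∈ A h, x * y ∈ A (g * h)) (g : G) :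
    A g * A g⁻¹ ≤ A 1 :=
  AddSubgroup.mul_le.2 fun m hm n hn => mul_inv_cancel g ▸ hA g g⁻¹ m hm n hn

theorem mul_mem_mul_inv_left (hA : ∀ g h : G, ∀ x ∈ A g, ∀ y ∈ A h, x * y ∈ A (g * h))
    {g : G} {r x : S} (hr : r ∈ A 1) (hx : x ∈ A g * A g⁻¹) : r * x ∈ A g * A g⁻¹ := by
  refine AddSubgroup.mul_induction_on hx (fun m hm n hn => ?_)
    fun x y hx hy => by rw [mul_add]; exact add_mem hx hy
  rw [← mul_assoc]
  exact AddSubgroup.mul_mem_mul (one_mul g ▸ hA 1 g r hr m hm) hn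

theorem mul_mem_mul_inv_right (hA : ∀ g h : G, ∀ x ∈ A g, ∀ y ∈ A h, x * y ∈ A (g * h))
    {g : G} {r x : S} (hr : r ∈ A 1) (hx : x ∈ A g * A g⁻¹) : x * r ∈ A g * A g⁻¹ := by
  refine AddSubgroup.mul_induction_on hx (fun m hm n hn => ?_)
    fun x y hx hy => by rw [add_mul]; exact add_mem hx hy
  rw [mul_assoc]
  exact AddSubgroup.mul_mem_mul hm (mul_one g⁻¹ ▸ hA g⁻¹ 1 n hn r hr)

theorem eps_mul_of_mem
    (hε : ∀ g : G, ε g ∈ A g * A g⁻¹ ∧ ∀ x ∈ A g, ε g * x = x ∧ x * ε g⁻¹ = x)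
    {g : G} {x : S} (hx : x ∈ A g * A g⁻¹) : ε g * x = x := by
  refine AddSubgroup.mul_induction_on hx (fun m hm n _ => ?_)
    fun x y hx hy => by rw [mul_add, hx, hy]
  rw [← mul_assoc, ((hε g).2 m hm).1]

theorem mul_eps_of_mem
    (hε : ∀ g : G, ε g ∈ A g * A g⁻¹ ∧ ∀ x ∈ A g, ε g * x = x ∧ x * ε g⁻¹ = x)
    {g : G} {x : S} (hx : x ∈ A g * A g⁻¹) : x * ε g = x := by
  refine AddSubgroup.mul_induction_on hx (fun m _ n hn => ?_)
    fun x y hx hy => by rw [add_mul, hx, hy]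
  rw [mul_assoc, ← inv_inv g, ((hε g⁻¹).2 n hn).2]

theorem isIdempotentElem_eps
    (hε : ∀ g : G, ε g ∈ A g * A g⁻¹ ∧ ∀ x ∈ A g, ε g * x = x ∧ x * ε g⁻¹ = x)
    (g : G) : IsIdempotentElem (ε g) :=
  eps_mul_of_mem hε (hε g).1

theorem commute_eps (hA : ∀ g h : G, ∀ x ∈ A g, ∀ y ∈ A h, x * y ∈ A (g * h))
    (hε : ∀ g : G, ε g ∈ A g * A g⁻¹ ∧ ∀ x ∈ A g, ε g * x = x ∧ x * ε g⁻¹ = x)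
    {g : G} {r : S} (hr : r ∈ A 1) : Commute (ε g) r :=
  calc ε g * r = ε g * r * ε g := (mul_eps_of_mem hε (mul_mem_mul_inv_right hA hr (hε g).1)).symm
    _ = ε g * (r * ε g) := mul_assoc _ _ _
    _ = r * ε g := eps_mul_of_mem hε (mul_mem_mul_inv_left hA hr (hε g).1)

end EpsilonStrong

theorem isEpsilonStrong_of_eps {G S : Type*} [Group G] [Ring S] {A : G → AddSubgroup S}
    (hA : ∀ g h : G, ∀ x ∈ A g, ∀ y ∈ A h, x * y ∈ A (g * h))
    (ε : G → S) (hε : ∀ g : G, ε g ∈ A g * A g⁻¹ ∧ ∀ x ∈ A g, ε g * x = x ∧ x * ε g⁻¹ = x) :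
    IsEpsilonStrong A := by
  refine ⟨fun g => le_antisymm ?_ fun x hx => ?_, ε, hε⟩
  · exact AddSubgroup.mul_le.2 fun m hm n hn =>
      one_mul g ▸ hA 1 g m (EpsilonStrong.mul_inv_le_one hA g hm) n hn
  · rw [← ((hε g).2 x hx).1]
    exact AddSubgroup.mul_mem_mul (hε g).1 hx

section InducedGrading

variable {G H S : Type*} [Group G] [Group H] [Ring S]

def inducedGrading (f : G →* H) (A : G → AddSubgroup S) (h : H) : AddSubgroup S :=
  ⨆ g ∈ {g | f g = h}, A g

variable {A : G → AddSubgroup S} {f : G →* H}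

theorem le_inducedGrading {g : G} {h : H} (hg : f g = h) : A g ≤ inducedGrading f A h :=
  le_biSup A hg

@[elab_as_elim]
theorem inducedGrading_induction {motive : S → Prop} {h : H} {x : S}
    (hx : x ∈ inducedGrading f A h) (mem : ∀ g, f g = h → ∀ y ∈ A g, motive y)
    (zero : motive 0) (add : ∀ x y, motive x → motive y → motive (x + y)) : motive x := by
  rw [inducedGrading, ← iSup_subtype''] at hx
  exact AddSubgroup.iSup_induction (C := motive) _ hx (fun g y hy => mem g.1 g.2 y hy) zero add

theorem inducedGrading_mul_mem (hA : ∀ g h : G, ∀ x ∈ A g, ∀ y ∈ A h, x * y ∈ A (g * h))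
    {h h' : H} {x y : S} (hx : x ∈ inducedGrading f A h) (hy : y ∈ inducedGrading f A h') :
    x * y ∈ inducedGrading f A (h * h') := by
  refine inducedGrading_induction hx (fun g hg a ha => ?_) (by simp)
    fun a b ha hb => by rw [add_mul]; exact add_mem ha hb
  refine inducedGrading_induction hy (fun g' hg' b hb => ?_) (by simp)
    fun b c hb hc => by rw [mul_add]; exact add_mem hb hc
  exact le_inducedGrading (by rw [map_mul, hg, hg']) (hA g g' a ha b hb)

theorem mul_eq_self_of_mem_inducedGrading
    {ε : G → S} (hε : ∀ g : G, ε g ∈ A g * A g⁻¹ ∧ ∀ x ∈ A g, ε g * x = x ∧ x * ε g⁻¹ = x)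
    {u : H → S} (hu : ∀ g, u (f g) * ε g = ε g ∧ ε g * u (f g) = ε g)
    {h : H} {x : S} (hx : x ∈ inducedGrading f A h) : u h * x = x ∧ x * u h⁻¹ = x := by
  refine inducedGrading_induction hx (fun g hg y hy => ?_) (by simp) fun a b ha hb => ?_
  · subst hg
    obtain ⟨hl, hr⟩ := (hε g).2 y hy
    constructor
    · rw [← hl, ← mul_assoc, (hu g).1]
    · rw [← hr, mul_assoc, ← map_inv, (hu g⁻¹).2]
  · rw [mul_add, add_mul, ha.1, hb.1, ha.2, hb.2]
    exact ⟨rfl, rfl⟩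

end InducedGrading

open EpsilonStrong in
theorem exists_mem_inducedGrading_mul_eps_eq {G H S : Type*} [Group G] [Group H] [Ring S]
    {A : G → AddSubgroup S} (hA : ∀ g h : G, ∀ x ∈ A g, ∀ y ∈ A h, x * y ∈ A (g * h))
    {ε : G → S} (hε : ∀ g : G, ε g ∈ A g * A g⁻¹ ∧ ∀ x ∈ A g, ε g * x = x ∧ x * ε g⁻¹ = x)
    (R : Subring S) (hR : (R : Set S) = (A 1 : Set S))
    (hnoeth : IsNoetherianRing R ∨ IsNoetherianRing (↥R)ᵐᵒᵖ) (f : G →* H) (h : H) :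
    ∃ u ∈ inducedGrading f A h * inducedGrading f A h⁻¹,
      ∀ g, f g = h → u * ε g = ε g ∧ ε g * u = ε g := by
  have hmemR : ∀ x, x ∈ R ↔ x ∈ A 1 := fun x => Set.ext_iff.1 hR x
  let e : {g // f g = h} → R := fun g => ⟨ε g, (hmemR _).2 (mul_inv_le_one hA g (hε g).1)⟩
  obtain ⟨F, u, hu, hue⟩ := exists_finset_exists_mem_iSup_span_forall_mul_eq hnoeth (e := e)
    (fun g r => Subtype.ext (commute_eps hA hε ((hmemR r).1 r.2)))
    (fun g => Subtype.ext (isIdempotentElem_eps hε g))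
  refine ⟨u, ?_, fun g hg => ?_⟩
  · obtain ⟨a, rfl⟩ := exists_eq_sum_mul_of_mem_iSup_span e hu
    rw [AddSubmonoidClass.coe_finsetSum]
    refine sum_mem fun g _ => ?_
    exact AddSubgroup.mul_le_mul (le_inducedGrading g.2) (le_inducedGrading (by rw [map_inv, g.2]))
      (mul_mem_mul_inv_left hA ((hmemR _).1 (a g).2) (hε g).1)
  · have hεu : ε g * u = ε g := congrArg Subtype.val (hue ⟨g, hg⟩)
    exact ⟨(commute_eps hA hε ((hmemR u).1 u.2)).eq ▸ hεu, hεu⟩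

/-- If `S` is an epsilon-strongly `G`-graded ring whose principal component `R = S_e` is
left or right noetherian, then for any normal subgroup `N ⊴ G` the induced `G/N`-grading
`S_C = ⊕_{g ∈ C} S_g` (for cosets `C ∈ G/N`) is an epsilon-strong `G/N`-grading of `S`. -/
theorem inducedQuotientGrading_epsilonStrong
    {G S : Type*} [Group G] [Ring S] [DecidableEq G]
    (A : G → AddSubgroup S) (hgrading : IsGrading A) (heps : IsEpsilonStrong A)
    (R : Subring S) (hR : (R : Set S) = (A 1 : Set S))
    (hnoeth : IsNoetherianRing R ∨ IsNoetherianRing (↥R)ᵐᵒᵖ)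
    (N : Subgroup G) [N.Normal] [DecidableEq (G ⧸ N)] :
    IsGrading (fun C : G ⧸ N => ⨆ g ∈ {g : G | (QuotientGroup.mk g : G ⧸ N) = C}, A g) ∧
    IsEpsilonStrong
      (fun C : G ⧸ N => ⨆ g ∈ {g : G | (QuotientGroup.mk g : G ⧸ N) = C}, A g) := by
  obtain ⟨hint, hA⟩ := hgrading
  obtain ⟨-, ε, hε⟩ := heps
  have hmul : ∀ C D : G ⧸ N, ∀ x ∈ inducedGrading (QuotientGroup.mk' N) A C,
      ∀ y ∈ inducedGrading (QuotientGroup.mk' N) A D,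
        x * y ∈ inducedGrading (QuotientGroup.mk' N) A (C * D) :=
    fun _ _ _ hx _ hy => inducedGrading_mul_mem hA hx hy
  choose u hu hεu using exists_mem_inducedGrading_mul_eps_eq hA hε R hR hnoeth (QuotientGroup.mk' N)
  exact ⟨⟨hint.addSubgroup_biSup_fiber QuotientGroup.mk, hmul⟩,
    isEpsilonStrong_of_eps hmul u fun C =>
      ⟨hu C, fun x hx => mul_eq_self_of_mem_inducedGrading hε (fun g => hεu _ g rfl) hx⟩⟩
end

section
/- Let G be an arbitrary group and let S = ⊕_{g∈G} S_g be an epsilon-strongly G-graded ring with principal component R = S_e. If the support Supp(S) = {g ∈ G : S_g ≠ {0}} is finite, then S is finitely generated as a left R-module and finitely generated as a right R-module (with R acting by ring multiplication in S). -/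
open Pointwise

/-!
Fix `g` in the support and write `ε_{g⁻¹} = ∑ᵢ aᵢ bᵢ` with `aᵢ ∈ S_{g⁻¹}`, `bᵢ ∈ S_g`. For
`x ∈ S_g` we get `x = x ε_{g⁻¹} = ∑ᵢ (x aᵢ) bᵢ` with `x aᵢ ∈ S_e = R`, so the finitely many `bᵢ`
generate `S_g` as a left `R`-module. Finitely many homogeneous components span `S`, so the union
of these generating sets generates `S`. The right-module statement is symmetric, using
`x = ε_g x`.
-/

theorem DirectSum.IsInternal.addSubgroup_iSup_eq_top {ι M : Type*} [DecidableEq ι]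
    [AddCommGroup M] {A : ι → AddSubgroup M} (h : DirectSum.IsInternal A) : iSup A = ⊤ := by
  rw [eq_top_iff, ← AddSubgroup.toAddSubmonoid_le, AddSubgroup.top_toAddSubmonoid,
    ← h.addSubmonoid_iSup_eq_top fun i => (A i).toAddSubmonoid]
  exact iSup_le fun i => AddSubgroup.toAddSubmonoid_le.2 (le_iSup A i)

namespace Submodule

theorem exists_finset_span_eq_top_of_iSup_eq_top {ι T M : Type*} [Semiring T]
    [AddCommGroup M] [Module T M] {A : ι → AddSubgroup M} (htop : iSup A = ⊤)
    (hfin : {i | A i ≠ ⊥}.Finite)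
    (hspan : ∀ i, ∃ F : Finset M, (A i : Set M) ⊆ span T (F : Set M)) :
    ∃ F : Finset M, span T (F : Set M) = ⊤ := by
  classical
  choose F hF using hspan
  set F' := hfin.toFinset.biUnion F
  refine ⟨F', eq_top_iff.2 fun x _ => ?_⟩
  refine AddSubgroup.iSup_induction A (C := (· ∈ span T (F' : Set M)))
    (htop ▸ AddSubgroup.mem_top x) (fun i y hy => ?_) (zero_mem _) fun _ _ => add_mem
  by_cases hi : A i = ⊥
  · rw [hi, AddSubgroup.mem_bot] at hy
    exact hy ▸ zero_mem _
  · refine span_mono ?_ (hF i hy)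
    exact_mod_cast Finset.subset_biUnion_of_mem F (hfin.mem_toFinset.2 hi)

end Submodule

section Ring

variable {S : Type*} [Ring S] {R : Subring S}

open Submodule

theorem exists_finset_subset_span_of_mul_right_identity {M P Q : AddSubgroup S}
    (hMP : ∀ x ∈ M, ∀ p ∈ P, x * p ∈ R) {e : S} (he : e ∈ P * Q)
    (hMe : ∀ x ∈ M, x * e = x) : ∃ F : Finset S, (M : Set S) ⊆ span R (F : Set S) := by
  classical
  suffices ∃ F : Finset S, ∀ x ∈ M, x * e ∈ span R (F : Set S) by
    obtain ⟨F, hF⟩ := this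
    exact ⟨F, fun x hx => hMe x hx ▸ hF x hx⟩
  refine AddSubmonoid.mul_induction_on he ?_ ?_
  · intro p hp q _
    refine ⟨{q}, fun x hx => ?_⟩
    rw [← mul_assoc]
    exact smul_mem _ (⟨x * p, hMP x hx p hp⟩ : R) (subset_span (Finset.mem_singleton_self q))
  · rintro a b ⟨Fa, ha⟩ ⟨Fb, hb⟩
    refine ⟨Fa ∪ Fb, fun x hx => ?_⟩
    rw [mul_add]
    exact add_mem (span_mono (by simp) (ha x hx)) (span_mono (by simp) (hb x hx))

-- `R.op` acts on `S` by right multiplication, so `span R.op` spans right `R`-submodules.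
theorem exists_finset_subset_span_op_of_mul_left_identity {M P Q : AddSubgroup S}
    (hQM : ∀ q ∈ Q, ∀ x ∈ M, q * x ∈ R) {e : S} (he : e ∈ P * Q)
    (heM : ∀ x ∈ M, e * x = x) : ∃ F : Finset S, (M : Set S) ⊆ span R.op (F : Set S) := by
  classical
  suffices ∃ F : Finset S, ∀ x ∈ M, e * x ∈ span R.op (F : Set S) by
    obtain ⟨F, hF⟩ := this
    exact ⟨F, fun x hx => heM x hx ▸ hF x hx⟩
  refine AddSubmonoid.mul_induction_on he ?_ ?_
  · intro p _ q hq
    refine ⟨{p}, fun x hx => ?_⟩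
    rw [mul_assoc]
    exact smul_mem _ (⟨MulOpposite.op (q * x), hQM q hq x hx⟩ : R.op)
      (subset_span (Finset.mem_singleton_self p))
  · rintro a b ⟨Fa, ha⟩ ⟨Fb, hb⟩
    refine ⟨Fa ∪ Fb, fun x hx => ?_⟩
    rw [add_mul]
    exact add_mem (span_mono (by simp) (ha x hx)) (span_mono (by simp) (hb x hx))

theorem exists_eq_sum_mul_of_span_eq_top {F : Finset S} (hF : span R (F : Set S) = ⊤)
    (s : S) : ∃ c : S → S, (∀ f ∈ F, c f ∈ R) ∧ s = ∑ f ∈ F, c f * f := by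
  obtain ⟨c, -, hc⟩ := mem_span_finset.1 (hF ▸ mem_top : s ∈ span R (F : Set S))
  exact ⟨fun f => c f, fun f _ => (c f).2, hc.symm⟩

theorem exists_eq_sum_mul_of_span_op_eq_top {F : Finset S} (hF : span R.op (F : Set S) = ⊤)
    (s : S) : ∃ c : S → S, (∀ f ∈ F, c f ∈ R) ∧ s = ∑ f ∈ F, f * c f := by
  obtain ⟨c, -, hc⟩ := mem_span_finset.1 (hF ▸ mem_top : s ∈ span R.op (F : Set S))
  exact ⟨fun f => (c f : Sᵐᵒᵖ).unop, fun f _ => (c f).2, hc.symm⟩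

end Ring

/-- If `S` is an epsilon-strongly `G`-graded ring with principal component `R = S_e` and
the support `{g : G | S_g ≠ {0}}` is finite, then `S` is finitely generated both as a left
`R`-module and as a right `R`-module (with `R` acting by ring multiplication in `S`). -/
theorem epsilonStrong_finite_support_finitely_generated
    {G S : Type*} [Group G] [Ring S] [DecidableEq G]
    (A : G → AddSubgroup S) (hgrading : IsGrading A) (heps : IsEpsilonStrong A)
    (R : Subring S) (hR : (R : Set S) = (A 1 : Set S))
    (hsupp : {g : G | A g ≠ ⊥}.Finite) :
    (∃ F : Finset S, ∀ s : S,
      ∃ c : S → S, (∀ f ∈ F, c f ∈ R) ∧ s = ∑ f ∈ F, c f * f) ∧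
    (∃ F : Finset S, ∀ s : S,
      ∃ c : S → S, (∀ f ∈ F, c f ∈ R) ∧ s = ∑ f ∈ F, f * c f) := by
  obtain ⟨hinternal, hmul⟩ := hgrading
  obtain ⟨-, ε, hε⟩ := heps
  have htop := hinternal.addSubgroup_iSup_eq_top
  have hmul_mem : ∀ g h : G, g * h = 1 → ∀ x ∈ A g, ∀ y ∈ A h, x * y ∈ R := by
    intro g h hgh x hx y hy
    rw [← SetLike.mem_coe, hR, ← hgh]
    exact hmul g h x hx y hy
  constructor
  · obtain ⟨F, hF⟩ := Submodule.exists_finset_span_eq_top_of_iSup_eq_top htop hsupp fun g =>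
      exists_finset_subset_span_of_mul_right_identity (hmul_mem g g⁻¹ (mul_inv_cancel g))
        (by simpa using (hε g⁻¹).1) fun x hx => ((hε g).2 x hx).2
    exact ⟨F, exists_eq_sum_mul_of_span_eq_top hF⟩
  · obtain ⟨F, hF⟩ := Submodule.exists_finset_span_eq_top_of_iSup_eq_top htop hsupp fun g =>
      exists_finset_subset_span_op_of_mul_left_identity (hmul_mem g⁻¹ g (inv_mul_cancel g))
        (hε g).1 fun x hx => ((hε g).2 x hx).1
    exact ⟨F, exists_eq_sum_mul_of_span_op_eq_top hF⟩
end

section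
/- Let G be a finite group and let S = ⊕_{g∈G} S_g be an epsilon-strongly G-graded ring with principal component R = S_e. If R is left noetherian, then S is left noetherian. -/
open Pointwise

/-- If `G` is a finite group and `S` is an epsilon-strongly `G`-graded ring whose
principal component `R = S_e` is left noetherian, then `S` is left noetherian. -/
theorem epsilonStrong_left_noetherian_of_finite
    {G S : Type*} [Group G] [Finite G] [Ring S] [DecidableEq G]
    (A : G → AddSubgroup S) (hgrading : IsGrading A) (heps : IsEpsilonStrong A)
    (R : Subring S) (hR : (R : Set S) = (A 1 : Set S))
    (hRnoeth : IsNoetherianRing R) :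
    IsNoetherianRing S := by
  classical
  haveI := hRnoeth
  obtain ⟨hint, hmul⟩ := hgrading
  obtain ⟨-, ε, hε⟩ := heps
  -- each component is contained in a finitely generated R-submodule
  have key : ∀ g : G, ∃ T : Finset S,
      ∀ x ∈ A g, x ∈ Submodule.span R (T : Set S) := by
    intro g
    have hεmem' : ε g⁻¹ ∈ (A g⁻¹).toAddSubmonoid * (A g).toAddSubmonoid := by
      have := (hε g⁻¹).1
      rwa [inv_inv] at this
    have main : ∃ T : Finset S, ∀ x ∈ A g,
        x * ε g⁻¹ ∈ Submodule.span R ((T : Set S)) := by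
      refine AddSubmonoid.mul_induction_on hεmem' ?_ ?_
      · intro m hm n hn
        refine ⟨{n}, fun x hx => ?_⟩
        have hxm : x * m ∈ R := by
          have := hmul g g⁻¹ x hx m hm
          rw [mul_inv_cancel] at this
          show _ ∈ (R : Set S)
          rw [hR]; exact this
        have hsm : (⟨x * m, hxm⟩ : R) • n ∈ Submodule.span R ({n} : Set S) :=
          Submodule.smul_mem _ _ (Submodule.mem_span_singleton_self n)
        have heq : x * (m * n) = (⟨x * m, hxm⟩ : R) • n := by
          rw [← mul_assoc]; rfl
        rw [heq]; simpa using hsm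
      · rintro u v ⟨T₁, h₁⟩ ⟨T₂, h₂⟩
        refine ⟨T₁ ∪ T₂, fun z hz => ?_⟩
        rw [mul_add]
        exact Submodule.add_mem _
          (Submodule.span_mono (by rw [Finset.coe_union]; exact Set.subset_union_left) (h₁ z hz))
          (Submodule.span_mono (by rw [Finset.coe_union]; exact Set.subset_union_right) (h₂ z hz))
    obtain ⟨T, hT⟩ := main
    exact ⟨T, fun x hx => by rw [← ((hε g).2 x hx).2]; exact hT x hx⟩
  choose T hT using key
  haveI : Fintype G := Fintype.ofFinite G
  -- S is a finitely generated R-module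
  have hfg : (⊤ : Submodule R S).FG := by
    refine ⟨Finset.univ.biUnion T, ?_⟩
    rw [eq_top_iff]
    intro s hs
    clear hs
    obtain ⟨x, rfl⟩ := hint.2 s
    induction x using DirectSum.induction_on with
    | zero => simp
    | of i a =>
        rw [DirectSum.coeAddMonoidHom_of]
        refine Submodule.span_mono ?_ (hT i a a.2)
        intro y hy
        simp only [Finset.coe_biUnion, Finset.coe_univ, Set.mem_iUnion]
        exact ⟨i, trivial, hy⟩
    | add x y hx hy =>
        rw [map_add]; exact Submodule.add_mem _ hx hy
  haveI : Module.Finite R S := ⟨hfg⟩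
  haveI : IsNoetherian R S := isNoetherian_of_isNoetherianRing_of_finite R S
  exact isNoetherian_of_tower R this
end

section
/- Let G be an arbitrary group and let S = ⊕_{g∈G} S_g be a G-graded ring with principal component R = S_e. If S is left artinian, then R is left artinian. -/
/-!
Let `π : S → R` be the projection onto the principal component. Since `S_g R ⊆ S_g`, `π` is
a homomorphism of right `R`-modules retracting `S` onto `R`. Hence every left ideal `I` of `R`
is recovered from the left ideal `S I` of `S` as `π (S I) = I`, so `I ↦ S I` is a strictly
monotone map from left ideals of `R` to left ideals of `S`, and the descending chain condition
passes from `S` to `R`.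
-/

open Pointwise

namespace Subring

variable {S : Type*} [Ring S] {R : Subring S} (π : S →+ R)

theorem retraction_mem_of_mem_map (hπmul : ∀ (s : S) (r : R), π (s * r) = π s * r)
    {I : Ideal R} {y : S} (hy : y ∈ I.map R.subtype) : π y ∈ I := by
  obtain ⟨n, s, x, rfl⟩ := Submodule.mem_span_set'.mp hy
  rw [map_sum]
  refine sum_mem fun i _ => ?_
  obtain ⟨r, hr, hrx⟩ := (x i).2
  rw [smul_eq_mul, ← hrx]
  change π (s i * r) ∈ I
  rw [hπmul]
  exact I.mul_mem_left _ hr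

theorem comap_map_subtype_of_retraction (hπmul : ∀ (s : S) (r : R), π (s * r) = π s * r)
    (hπ : ∀ r : R, π r = r) (I : Ideal R) : (I.map R.subtype).comap R.subtype = I :=
  le_antisymm (fun x hx => hπ x ▸ retraction_mem_of_mem_map π hπmul hx) Ideal.le_comap_map

theorem isArtinianRing_of_retraction [IsArtinianRing S]
    (hπmul : ∀ (s : S) (r : R), π (s * r) = π s * r) (hπ : ∀ r : R, π r = r) :
    IsArtinianRing R :=
  (Monotone.strictMono_of_injective (fun _ _ => Ideal.map_mono (f := R.subtype))
    (Function.LeftInverse.injective (comap_map_subtype_of_retraction π hπmul hπ))).wellFoundedLT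

end Subring

section PrincipalProj

open DirectSum

variable {G S : Type*} [Group G] [Ring S] [DecidableEq G] (A : G → AddSubgroup S)
  [Decomposition A]

def principalProj : S →+ S :=
  (A 1).subtype.comp ((DFinsupp.evalAddMonoidHom 1).comp (decomposeAddEquiv A).toAddMonoidHom)

theorem principalProj_mem (x : S) : principalProj A x ∈ A 1 :=
  (decompose A x 1).2

theorem principalProj_of_mem_one {x : S} (hx : x ∈ A 1) : principalProj A x = x :=
  decompose_of_mem_same A hx

theorem principalProj_of_mem_ne_one {g : G} {x : S} (hx : x ∈ A g) (hg : g ≠ 1) :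
    principalProj A x = 0 :=
  decompose_of_mem_ne A hx hg

theorem principalProj_mul_of_mem_one
    (hmul : ∀ g h : G, ∀ x ∈ A g, ∀ y ∈ A h, x * y ∈ A (g * h)) (s : S) {r : S} (hr : r ∈ A 1) :
    principalProj A (s * r) = principalProj A s * r := by
  induction s using Decomposition.inductionOn A with
  | zero => simp
  | add x y hx hy => rw [add_mul, map_add, map_add, hx, hy, add_mul]
  | @homogeneous g x =>
    have hxr : (x : S) * r ∈ A g := by simpa using hmul g 1 _ x.2 r hr
    by_cases hg : g = 1
    · subst hg
      rw [principalProj_of_mem_one A hxr, principalProj_of_mem_one A x.2]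
    · rw [principalProj_of_mem_ne_one A hxr hg, principalProj_of_mem_ne_one A x.2 hg, zero_mul]

end PrincipalProj

/-- If `S` is a `G`-graded ring with principal component `R = S_e` and `S` is left
artinian, then `R` is left artinian. -/
theorem left_artinian_principal_of_left_artinian
    {G S : Type*} [Group G] [Ring S] [DecidableEq G]
    (A : G → AddSubgroup S) (hgrading : IsGrading A)
    (R : Subring S) (hR : (R : Set S) = (A 1 : Set S))
    (hS : IsArtinianRing S) :
    IsArtinianRing R := by
  obtain ⟨hinternal, hmul⟩ := hgrading
  let _ := hinternal.chooseDecomposition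
  have hmem_R (x : S) : x ∈ R ↔ x ∈ A 1 := Set.ext_iff.mp hR x
  let π : S →+ R :=
    (principalProj A).codRestrict R fun x => (hmem_R _).mpr (principalProj_mem A x)
  refine R.isArtinianRing_of_retraction π (fun s r => Subtype.ext ?_) (fun r => Subtype.ext ?_)
  · exact principalProj_mul_of_mem_one A hmul s ((hmem_R r).mp r.2)
  · exact principalProj_of_mem_one A ((hmem_R r).mp r.2)
end

section
/- Let G be an arbitrary group and let S = ⊕_{g∈G} S_g be an epsilon-strongly G-graded ring with principal component R = S_e. If the support Supp(S) = {g ∈ G : S_g ≠ {0}} is finite and R is left artinian, then S is left artinian. -/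
open Pointwise

/-- If `S` is an epsilon-strongly `G`-graded ring with finite support whose principal
component `R = S_e` is left artinian, then `S` is left artinian. -/
theorem epsilonStrong_left_artinian_of_finite_support
    {G S : Type*} [Group G] [Ring S] [DecidableEq G]
    (A : G → AddSubgroup S) (hgrading : IsGrading A) (heps : IsEpsilonStrong A)
    (R : Subring S) (hR : (R : Set S) = (A 1 : Set S))
    (hsupp : {g : G | A g ≠ ⊥}.Finite)
    (hRart : IsArtinianRing R) :
    IsArtinianRing S := by
  classical
  -- A g * A h ⊆ A (g*h)
  have hmul := hgrading.2
  obtain ⟨ε, hε⟩ := heps.2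
  -- Key: for each g, there is a finite set T ⊆ S with A g ⊆ span R T.
  have key : ∀ g : G, ∃ T : Finset S, (A g : Set S) ⊆ (Submodule.span R (T : Set S) : Set S) := by
    intro g
    have hεmem : ε g⁻¹ ∈ A g⁻¹ * A g := by
      have := (hε g⁻¹).1
      rwa [inv_inv] at this
    -- induction on membership of ε g⁻¹ in the product
    have main : ∀ y ∈ (A g⁻¹ * A g : AddSubgroup S), ∃ T : Finset S,
        ∀ x ∈ A g, x * y ∈ Submodule.span R (T : Set S) := by
      intro y hy
      refine AddSubmonoid.mul_induction_on
        (show y ∈ (A g⁻¹).toAddSubmonoid * (A g).toAddSubmonoid from hy) ?_ ?_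
      · intro c hc d hd
        refine ⟨{d}, fun x hx => ?_⟩
        have hxc : x * c ∈ A (g * g⁻¹) := hmul g g⁻¹ x hx c hc
        rw [mul_inv_cancel] at hxc
        have hxcR : x * c ∈ R := by rw [SetLike.mem_coe.symm, hR]; exact hxc
        have : x * (c * d) = (⟨x * c, hxcR⟩ : R) • d := by
          show x * (c * d) = (x * c) * d
          rw [mul_assoc]
        rw [this]
        exact Submodule.smul_mem _ _ (Submodule.subset_span (by simp))
      · rintro a b ⟨T₁, h₁⟩ ⟨T₂, h₂⟩
        refine ⟨T₁ ∪ T₂, fun x hx => ?_⟩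
        rw [mul_add]
        have hsub₁ : Submodule.span R (T₁ : Set S) ≤ Submodule.span R ((T₁ ∪ T₂ : Finset S) : Set S) :=
          Submodule.span_mono (by simp [Finset.coe_union])
        have hsub₂ : Submodule.span R (T₂ : Set S) ≤ Submodule.span R ((T₁ ∪ T₂ : Finset S) : Set S) :=
          Submodule.span_mono (by simp [Finset.coe_union])
        exact Submodule.add_mem _ (hsub₁ (h₁ x hx)) (hsub₂ (h₂ x hx))
    obtain ⟨T, hT⟩ := main (ε g⁻¹) hεmem
    refine ⟨T, fun x hx => ?_⟩
    have hid := ((hε g).2 x hx).2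
    have := hT x hx
    rwa [hid] at this
  choose T hT using key
  -- the finite generating set
  set F : Finset S := hsupp.toFinset.biUnion T with hF
  have hspan : Submodule.span R (F : Set S) = ⊤ := by
    rw [eq_top_iff]
    intro s _
    -- s is in the image of the direct sum
    obtain ⟨f, hf⟩ := hgrading.1.surjective s
    rw [← hf]
    clear hf
    induction f using DirectSum.induction_on with
    | zero => simp
    | of g x =>
        rw [DirectSum.coeAddMonoidHom_of]
        by_cases hg : A g ≠ ⊥
        · have hsub : Submodule.span R ((T g : Set S)) ≤ Submodule.span R (F : Set S) := by
            apply Submodule.span_mono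
            intro t ht
            rw [hF]
            simp only [Finset.coe_biUnion, Set.mem_iUnion]
            exact ⟨g, by simpa using hg, ht⟩
          exact hsub (hT g x.2)
        · push_neg at hg
          have : (x : S) = 0 := by
            have h2 : (x : S) ∈ (⊥ : AddSubgroup S) := by rw [← hg]; exact x.2
            simpa using h2
          rw [this]; simp
    | add a b ha hb =>
        rw [map_add]
        exact Submodule.add_mem _ ha hb
  have hfin : Module.Finite R S := ⟨⟨F, hspan⟩⟩
  have hart : IsArtinian R S := isArtinian_of_fg_of_artinian'
  exact ⟨(Submodule.restrictScalarsEmbedding R S S).wellFounded hart.wf⟩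
end
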